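/- Let φ be an Orlicz function taking only finite values and such that ∑_{n=n₁}^∞ φ(1/n) < ∞ for some n₁ ∈ ℕ. Then for every x ∈ A_φ: ‖x‖_φ = 1 if and only if ρ_φ(x) = 1. -/

import Mathlib

open scoped ENNReal
open Filter

/-- An Orlicz function: `φ : ℝ → [0,∞]` even, convex, left continuous on `ℝ₊`,
continuous at zero, with `φ 0 = 0` and `φ u → ∞` as `u → ∞`. -/
structure OrliczFunction where
  toFun : ℝ → ℝ≥0∞
  even' : ∀ u : ℝ, toFun (-u) = toFun u
  convex' : ∀ u v t : ℝ, 0 ≤ t → t ≤ 1 →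
    toFun (t * u + (1 - t) * v) ≤ ENNReal.ofReal t * toFun u + ENNReal.ofReal (1 - t) * toFun v
  map_zero' : toFun 0 = 0
  leftContinuous' : ∀ t : ℝ, 0 < t → Tendsto toFun (nhdsWithin t (Set.Iio t)) (nhds (toFun t))
  continuousAtZero' : Tendsto toFun (nhds 0) (nhds 0)
  tendsto_top' : Tendsto toFun atTop (nhds ⊤)

/-- The Cesàro mean `σx(n) = (1/n) ∑_{j=1}^n |x j|` (with `0`-based indexing). -/
noncomputable def cesaroMean (x : ℕ → ℝ) (n : ℕ) : ℝ :=
  (∑ j ∈ Finset.range (n + 1), |x j|) / (n + 1)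

/-- The modular `ρ_φ(x) = ∑_i φ(σx(i))`. -/
noncomputable def rho (φ : OrliczFunction) (x : ℕ → ℝ) : ℝ≥0∞ :=
  ∑' n : ℕ, φ.toFun (cesaroMean x n)

/-- The Cesàro–Orlicz sequence space `ces_φ`. -/
def cesOrlicz (φ : OrliczFunction) : Set (ℕ → ℝ) :=
  {x | ∃ lam : ℝ, 0 < lam ∧ rho φ (fun i => lam * x i) < ⊤}

/-- The Luxemburg norm `‖x‖_φ = inf {λ > 0 : ρ_φ(x/λ) ≤ 1}`. -/
noncomputable def luxNorm (φ : OrliczFunction) (x : ℕ → ℝ) : ℝ :=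
  sInf {lam : ℝ | 0 < lam ∧ rho φ (fun i => x i / lam) ≤ 1}

/-- The subspace `A_φ` of `ces_φ`. -/
def Aphi (φ : OrliczFunction) : Set (ℕ → ℝ) :=
  {x | x ∈ cesOrlicz φ ∧ ∀ k : ℝ, 0 < k → ∃ nk : ℕ,
    ∑' n : ℕ, φ.toFun ((k / ((nk + n + 1 : ℕ) : ℝ)) * ∑ i ∈ Finset.range (nk + n + 1), |x i|) < ⊤}

/-- `∃ n₁, ∑_{n=n₁}^∞ φ(1/n) < ∞`. -/
def TailFinite (φ : OrliczFunction) : Prop :=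
  ∃ n₁ : ℕ, ∑' n : ℕ, φ.toFun (((n₁ + n + 1 : ℕ) : ℝ)⁻¹) < ⊤

/-- The `Δ₂`-condition at zero. -/
def Delta2Zero (φ : OrliczFunction) : Prop :=
  ∃ K : ℝ, 0 < K ∧ ∃ a : ℝ, 0 < a ∧ 0 < φ.toFun a ∧
    ∀ u : ℝ, 0 ≤ u → u ≤ a → φ.toFun (2 * u) ≤ ENNReal.ofReal K * φ.toFun u

/-- `φ` takes only finite values. -/
def FiniteValued (φ : OrliczFunction) : Prop := ∀ u : ℝ, φ.toFun u ≠ ⊤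

/-!
For `x ∈ A_φ` and finite-valued `φ`, every dilate `k x` has finite modular. Convexity of `φ`
between `u` and `2u` gives `ρ(l y) ≤ ρ(y) + (l - 1) ρ(2y)` for `1 ≤ l ≤ 2`, so `l ↦ ρ(l x)` is
right-continuous at `1`. If `‖x‖ = 1`, applying this to `y = x/l` with `ρ(x/l) ≤ 1` and `l ↓ 1`
gives `ρ(x) ≤ 1`; and `ρ(x) < 1` would give `ρ(l x) ≤ 1` for some `l > 1`, i.e. `‖x‖ < 1`.
Conversely, if `ρ(x) = 1` then `‖x‖ ≤ 1`, while `ρ(x/l) ≤ 1` with `l < 1` would force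
`ρ(x) ≤ l ρ(x/l) < 1`.
-/

open Topology

namespace OrliczFunction

variable (φ : OrliczFunction)

theorem map_mul_le {t : ℝ} (ht0 : 0 ≤ t) (ht1 : t ≤ 1) (u : ℝ) :
    φ.toFun (t * u) ≤ ENNReal.ofReal t * φ.toFun u := by
  simpa [φ.map_zero'] using φ.convex' u 0 t ht0 ht1

theorem map_le_add_of_one_le {l : ℝ} (hl1 : 1 ≤ l) (hl2 : l ≤ 2) (u : ℝ) :
    φ.toFun (l * u) ≤ φ.toFun u + ENNReal.ofReal (l - 1) * φ.toFun (2 * u) := by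
  have h := φ.convex' u (2 * u) (2 - l) (by linarith) (by linarith)
  rw [show (2 - l) * u + (1 - (2 - l)) * (2 * u) = l * u by ring,
    show (1 : ℝ) - (2 - l) = l - 1 by ring] at h
  refine h.trans (add_le_add_left ?_ _)
  calc ENNReal.ofReal (2 - l) * φ.toFun u ≤ 1 * φ.toFun u := by
        gcongr
        exact ENNReal.ofReal_le_one.2 (by linarith)
    _ = φ.toFun u := one_mul _

theorem monotoneOn : MonotoneOn φ.toFun (Set.Ici 0) := by
  intro s hs t _ hst
  rcases (show (0 : ℝ) ≤ t from le_trans hs hst).eq_or_lt with rfl | ht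
  · rw [le_antisymm hst hs]
  have hst1 : s / t ≤ 1 := div_le_one_of_le₀ hst ht.le
  calc φ.toFun s = φ.toFun (s / t * t) := by rw [div_mul_cancel₀ s ht.ne']
    _ ≤ ENNReal.ofReal (s / t) * φ.toFun t := φ.map_mul_le (div_nonneg hs ht.le) hst1 t
    _ ≤ 1 * φ.toFun t := by
        gcongr
        exact ENNReal.ofReal_le_one.2 hst1
    _ = φ.toFun t := one_mul _

end OrliczFunction

theorem ENNReal.tendsto_add_ofReal_mul (a : ℝ≥0∞) {C : ℝ≥0∞} (hC : C ≠ ⊤) :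
    Tendsto (fun δ : ℝ => a + ENNReal.ofReal δ * C) (𝓝 0) (𝓝 a) := by
  simpa using tendsto_const_nhds.add
    (ENNReal.Tendsto.mul_const (ENNReal.tendsto_ofReal (tendsto_id (x := 𝓝 (0 : ℝ)))) (.inr hC))

theorem cesaroMean_nonneg (x : ℕ → ℝ) (n : ℕ) : 0 ≤ cesaroMean x n := by
  unfold cesaroMean
  positivity

theorem cesaroMean_const_mul (c : ℝ) (x : ℕ → ℝ) (n : ℕ) :
    cesaroMean (fun i => c * x i) n = |c| * cesaroMean x n := by
  simp only [cesaroMean, abs_mul, ← Finset.mul_sum, mul_div_assoc]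

theorem cesaroMean_mono {x y : ℕ → ℝ} (h : ∀ i, |x i| ≤ |y i|) (n : ℕ) :
    cesaroMean x n ≤ cesaroMean y n := by
  unfold cesaroMean
  exact div_le_div_of_nonneg_right (Finset.sum_le_sum fun i _ => h i) (by positivity)

namespace rho

variable (φ : OrliczFunction)

theorem mono {x y : ℕ → ℝ} (h : ∀ i, |x i| ≤ |y i|) : rho φ x ≤ rho φ y :=
  ENNReal.tsum_le_tsum fun n =>
    φ.monotoneOn (cesaroMean_nonneg x n) (cesaroMean_nonneg y n) (cesaroMean_mono h n)

theorem const_mul_le {t : ℝ} (ht0 : 0 ≤ t) (ht1 : t ≤ 1) (x : ℕ → ℝ) :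
    rho φ (fun i => t * x i) ≤ ENNReal.ofReal t * rho φ x := by
  rw [rho, rho, ← ENNReal.tsum_mul_left]
  refine ENNReal.tsum_le_tsum fun n => ?_
  rw [cesaroMean_const_mul, abs_of_nonneg ht0]
  exact φ.map_mul_le ht0 ht1 _

theorem const_mul_le_add {l : ℝ} (hl1 : 1 ≤ l) (hl2 : l ≤ 2) (x : ℕ → ℝ) :
    rho φ (fun i => l * x i)
      ≤ rho φ x + ENNReal.ofReal (l - 1) * rho φ (fun i => 2 * x i) := by
  rw [rho, rho, rho, ← ENNReal.tsum_mul_left, ← ENNReal.tsum_add]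
  refine ENNReal.tsum_le_tsum fun n => ?_
  rw [cesaroMean_const_mul, cesaroMean_const_mul, abs_of_nonneg (by linarith : (0 : ℝ) ≤ l),
    abs_two]
  exact φ.map_le_add_of_one_le hl1 hl2 _

theorem const_mul_lt_top_of_mem_Aphi {φ : OrliczFunction} (hfin : FiniteValued φ)
    {x : ℕ → ℝ} (hx : x ∈ Aphi φ) {k : ℝ} (hk : 0 < k) :
    rho φ (fun i => k * x i) < ⊤ := by
  obtain ⟨N, hN⟩ := hx.2 k hk
  have htail : ∀ n, φ.toFun (cesaroMean (fun i => k * x i) (n + N))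
      = φ.toFun (k / ((N + n + 1 : ℕ) : ℝ) * ∑ i ∈ Finset.range (N + n + 1), |x i|) := by
    intro n
    rw [cesaroMean_const_mul, abs_of_pos hk, cesaroMean, show n + N + 1 = N + n + 1 by omega]
    push_cast
    congr 1
    ring
  rw [rho, ← ENNReal.summable.sum_add_tsum_nat_add' (k := N), tsum_congr htail]
  exact ENNReal.add_lt_top.2 ⟨ENNReal.sum_lt_top.2 fun i _ => (hfin _).lt_top, hN⟩

end rho

namespace luxNorm

variable {φ : OrliczFunction} {x : ℕ → ℝ}

theorem le_of_rho_div_le_one {l : ℝ} (hl : 0 < l) (h : rho φ (fun i => x i / l) ≤ 1) :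
    luxNorm φ x ≤ l :=
  csInf_le ⟨0, fun _ hm => hm.1.le⟩ ⟨hl, h⟩

theorem exists_rho_div_le_one_of_lt (h0 : luxNorm φ x ≠ 0) {l : ℝ} (hl : luxNorm φ x < l) :
    ∃ m, luxNorm φ x ≤ m ∧ m < l ∧ 0 < m ∧ rho φ (fun i => x i / m) ≤ 1 := by
  have hbdd : BddBelow {m : ℝ | 0 < m ∧ rho φ (fun i => x i / m) ≤ 1} :=
    ⟨0, fun _ hm => hm.1.le⟩
  have hne : {m : ℝ | 0 < m ∧ rho φ (fun i => x i / m) ≤ 1}.Nonempty := by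
    by_contra hempty
    exact h0 (by rw [luxNorm, Set.not_nonempty_iff_eq_empty.1 hempty, Real.sInf_empty])
  obtain ⟨m, hm, hml⟩ := (csInf_lt_iff hbdd hne).1 hl
  exact ⟨m, csInf_le hbdd hm, hml, hm⟩

theorem eq_one_of_rho_eq_one (h : rho φ x = 1) : luxNorm φ x = 1 := by
  have h1 : rho φ (fun i => x i / 1) ≤ 1 := by simpa using h.le
  refine le_antisymm (le_of_rho_div_le_one one_pos h1) (le_csInf ⟨1, one_pos, h1⟩ ?_)
  rintro m ⟨hm0, hm⟩
  by_contra! hm1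
  have hx : (fun i => m * (x i / m)) = x := funext fun i => mul_div_cancel₀ _ hm0.ne'
  have : rho φ x ≤ ENNReal.ofReal m := by
    simpa [hx] using (rho.const_mul_le φ hm0.le hm1.le _).trans (mul_le_of_le_one_right' hm)
  rw [h] at this
  exact (ENNReal.ofReal_lt_one.2 hm1).not_ge this

theorem rho_le_one_of_eq_one (hC : rho φ (fun i => 2 * x i) ≠ ⊤) (h : luxNorm φ x = 1) :
    rho φ x ≤ 1 := by
  refine ge_of_tendsto ((ENNReal.tendsto_add_ofReal_mul 1 hC).mono_left
    (nhdsWithin_le_nhds (s := Set.Ioi 0))) ?_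
  filter_upwards [Ioo_mem_nhdsGT one_pos] with δ ⟨hδ0, hδ1⟩
  obtain ⟨m, h1m, hmδ, hm0, hm⟩ := exists_rho_div_le_one_of_lt (by rw [h]; exact one_ne_zero)
    (show luxNorm φ x < 1 + δ by linarith)
  rw [h] at h1m
  have hx2 : ∀ i, |2 * (x i / m)| ≤ |2 * x i| := fun i => by
    rw [abs_mul, abs_mul, abs_div, abs_of_pos hm0]
    gcongr
    exact div_le_self (abs_nonneg _) h1m
  calc rho φ x = rho φ (fun i => m * (x i / m)) := by simp_rw [mul_div_cancel₀ _ hm0.ne']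
    _ ≤ rho φ (fun i => x i / m) + ENNReal.ofReal (m - 1) * rho φ (fun i => 2 * (x i / m)) :=
        rho.const_mul_le_add φ h1m (by linarith) _
    _ ≤ 1 + ENNReal.ofReal δ * rho φ (fun i => 2 * x i) := by
        gcongr
        · linarith
        · exact rho.mono φ hx2

theorem one_le_rho_of_eq_one (hC : rho φ (fun i => 2 * x i) ≠ ⊤) (h : luxNorm φ x = 1) :
    1 ≤ rho φ x := by
  by_contra! hlt
  have hlim := (ENNReal.tendsto_add_ofReal_mul (rho φ x) hC).mono_left
    (nhdsWithin_le_nhds (s := Set.Ioi 0))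
  obtain ⟨δ, hδ, hδ0, hδ1⟩ :=
    ((hlim.eventually (gt_mem_nhds hlt)).and (Ioo_mem_nhdsGT one_pos)).exists
  have hρ : rho φ (fun i => x i / (1 / (1 + δ))) ≤ 1 := by
    have hx : (fun i => x i / (1 / (1 + δ))) = fun i => (1 + δ) * x i := funext fun i => by
      field_simp
    rw [hx]
    refine (rho.const_mul_le_add φ (by linarith) (by linarith) x).trans ?_
    simpa using hδ.le
  have := le_of_rho_div_le_one (by positivity) hρ
  rw [h, le_div_iff₀ (by positivity)] at this
  linarith

end luxNorm

theorem stmt_9_general (φ : OrliczFunction) (hfin : FiniteValued φ)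
    (x : ℕ → ℝ) (hx : x ∈ Aphi φ) :
    luxNorm φ x = 1 ↔ rho φ x = 1 := by
  have hC : rho φ (fun i => 2 * x i) ≠ ⊤ :=
    (rho.const_mul_lt_top_of_mem_Aphi hfin hx two_pos).ne
  refine ⟨fun h => le_antisymm ?_ ?_, luxNorm.eq_one_of_rho_eq_one⟩
  · exact luxNorm.rho_le_one_of_eq_one hC h
  · exact luxNorm.one_le_rho_of_eq_one hC h

/-- for finite-valued `φ` and `x ∈ A_φ`, `‖x‖_φ = 1 ↔ ρ_φ(x) = 1`. -/
theorem stmt_9 (φ : OrliczFunction) (hfin : FiniteValued φ) (htail : TailFinite φ)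
    (x : ℕ → ℝ) (hx : x ∈ Aphi φ) :
    luxNorm φ x = 1 ↔ rho φ x = 1 :=
  stmt_9_general φ hfin x hx
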